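/- For complex parameters a, b, b', c (with c and c+1 not nonpositive integers) and x, y in the open unit disk, the Appell series satisfies the contiguous relation c·F₁(a; b, b'; c; x, y) − (c−a)·F₁(a; b, b'; c+1; x, y) − a·F₁(a+1; b, b'; c+1; x, y) = 0. -/

import Mathlib

/-!
Termwise, the relation reduces to the one-variable identity
`c (a)ₖ/(c)ₖ = (c - a)(a)ₖ/(c+1)ₖ + a (a+1)ₖ/(c+1)ₖ`, which follows from the shifts
`c (c+1)ₖ = (c)ₖ (c + k)` and `a (a+1)ₖ = (a)ₖ (a + k)`. The three series converge
absolutely on the bidisk because `(a)ₖ/(c)ₖ` and `(b)ₘ/m! = (b)ₘ/(1)ₘ` satisfy the ratio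
test with ratio tending to `1`, so the relation may be summed term by term.
-/

/-- The Pochhammer symbol (rising factorial) in `ℂ`. -/
noncomputable def poch (a : ℂ) (k : ℕ) : ℂ := ∏ i ∈ Finset.range k, (a + i)

/-- The Appell hypergeometric series `F₁(a; b, b'; c; x, y)`. -/
noncomputable def appellF1 (a b b' c x y : ℂ) : ℂ :=
  ∑' p : ℕ × ℕ,
    poch a (p.1 + p.2) * poch b p.1 * poch b' p.2 /
      ((p.1.factorial : ℂ) * (p.2.factorial : ℂ) * poch c (p.1 + p.2)) *
      x ^ p.1 * y ^ p.2

open Filter Topology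

lemma poch_succ (a : ℂ) (k : ℕ) : poch a (k + 1) = poch a k * (a + k) :=
  Finset.prod_range_succ _ _

lemma poch_succ' (a : ℂ) (k : ℕ) : poch a (k + 1) = a * poch (a + 1) k := by
  rw [poch, poch, Finset.prod_range_succ']
  push_cast
  simp only [add_zero, add_assoc, add_comm (1 : ℂ), mul_comm]

lemma poch_one (k : ℕ) : poch 1 k = k.factorial := by
  rw [poch, ← Finset.prod_range_add_one_eq_factorial]
  push_cast
  simp only [add_comm]

lemma poch_ne_zero {c : ℂ} (hc : ∀ m : ℕ, c ≠ -m) (k : ℕ) : poch c k ≠ 0 :=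
  Finset.prod_ne_zero_iff.mpr fun i _ hi => hc i (eq_neg_of_add_eq_zero_left hi)

lemma add_one_ne_neg_natCast {c : ℂ} (hc : ∀ m : ℕ, c ≠ -m) (m : ℕ) : c + 1 ≠ -m := by
  intro h
  exact hc (m + 1) (by push_cast; linear_combination h)

lemma poch_div_poch_contiguous (a c : ℂ) (k : ℕ) (hc : poch c k ≠ 0)
    (hc1 : poch (c + 1) k ≠ 0) :
    c * (poch a k / poch c k) =
      (c - a) * (poch a k / poch (c + 1) k) + a * (poch (a + 1) k / poch (c + 1) k) := by
  have hcshift : c * poch (c + 1) k = poch c k * (c + k) := by rw [← poch_succ', poch_succ]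
  have hashift : a * poch (a + 1) k = poch a k * (a + k) := by rw [← poch_succ', poch_succ]
  field_simp
  linear_combination poch a k * hcshift - poch c k * hashift

lemma summable_norm_poch_div_poch_mul_pow (a c : ℂ) {r : ℝ}
    (hr0 : 0 ≤ r) (hr1 : r < 1) : Summable fun k : ℕ => ‖poch a k / poch c k‖ * r ^ k := by
  have hratio : Tendsto (fun k : ℕ => ‖(a + k) / (c + k)‖ * r) atTop (𝓝 r) := by
    simpa using ((tendsto_add_mul_div_add_mul_atTop_nhds a c 1 one_ne_zero).norm.mul_const r)
  refine summable_of_ratio_norm_eventually_le (r := (1 + r) / 2) (by linarith) ?_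
  filter_upwards [hratio.eventually (gt_mem_nhds (show r < (1 + r) / 2 by linarith))] with k hk
  have hstep : poch a (k + 1) / poch c (k + 1) = poch a k / poch c k * ((a + k) / (c + k)) := by
    rw [poch_succ, poch_succ, mul_div_mul_comm]
  rw [Real.norm_of_nonneg (by positivity), Real.norm_of_nonneg (by positivity), hstep, norm_mul]
  calc ‖poch a k / poch c k‖ * ‖(a + k) / (c + k)‖ * r ^ (k + 1)
      = ‖poch a k / poch c k‖ * r ^ k * (‖(a + k) / (c + k)‖ * r) := by ring
    _ ≤ ‖poch a k / poch c k‖ * r ^ k * ((1 + r) / 2) := by gcongr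
    _ = _ := by ring

noncomputable def appellF1Term (a b b' c x y : ℂ) (p : ℕ × ℕ) : ℂ :=
  poch a (p.1 + p.2) * poch b p.1 * poch b' p.2 /
    ((p.1.factorial : ℂ) * (p.2.factorial : ℂ) * poch c (p.1 + p.2)) * x ^ p.1 * y ^ p.2

lemma appellF1_eq_tsum (a b b' c x y : ℂ) :
    appellF1 a b b' c x y = ∑' p, appellF1Term a b b' c x y p := rfl

lemma appellF1Term_eq (a b b' c x y : ℂ) (m n : ℕ) :
    appellF1Term a b b' c x y (m, n) =
      poch a (m + n) / poch c (m + n) * (poch b m / poch 1 m * x ^ m) *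
        (poch b' n / poch 1 n * y ^ n) := by
  rw [appellF1Term, poch_one, poch_one]
  ring

lemma summable_appellF1Term (a b b' c : ℂ) {x y : ℂ} (hx : ‖x‖ < 1) (hy : ‖y‖ < 1) :
    Summable (appellF1Term a b b' c x y) := by
  -- With `‖x‖ᵐ ≤ sᵐ sᵐ`, one factor `s^(m+n)` absorbs `(a)ₖ/(c)ₖ`,
  -- the other the `b` and `b'` factors.
  set s := √(max ‖x‖ ‖y‖)
  have hs0 : 0 ≤ s := Real.sqrt_nonneg _
  have hs1 : s < 1 := by rw [Real.sqrt_lt' one_pos, one_pow]; exact max_lt hx hy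
  have hxs : ‖x‖ ≤ s * s := by rw [Real.mul_self_sqrt (by positivity)]; exact le_max_left _ _
  have hys : ‖y‖ ≤ s * s := by rw [Real.mul_self_sqrt (by positivity)]; exact le_max_right _ _
  set u := fun k : ℕ => ‖poch a k / poch c k‖ * s ^ k
  set v := fun (β : ℂ) (m : ℕ) => ‖poch β m / poch 1 m‖ * s ^ m
  have hu := summable_norm_poch_div_poch_mul_pow a c hs0 hs1
  have hu_le : ∀ k, u k ≤ ∑' j, u j := fun k => hu.le_tsum k fun j _ => by positivity
  have hv : Summable fun p : ℕ × ℕ => v b p.1 * v b' p.2 :=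
    (summable_norm_poch_div_poch_mul_pow b 1 hs0 hs1).mul_of_nonneg
      (summable_norm_poch_div_poch_mul_pow b' 1 hs0 hs1) (fun _ => by positivity)
      (fun _ => by positivity)
  refine Summable.of_norm_bounded (hv.mul_left (∑' j, u j)) fun ⟨m, n⟩ => ?_
  have hxm : ‖x‖ ^ m ≤ s ^ m * s ^ m := by rw [← mul_pow]; gcongr
  have hyn : ‖y‖ ^ n ≤ s ^ n * s ^ n := by rw [← mul_pow]; gcongr
  calc ‖appellF1Term a b b' c x y (m, n)‖
      = ‖poch a (m + n) / poch c (m + n)‖ * (‖poch b m / poch 1 m‖ * ‖x‖ ^ m) *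
          (‖poch b' n / poch 1 n‖ * ‖y‖ ^ n) := by
        rw [appellF1Term_eq]; simp only [norm_mul, norm_pow]
    _ ≤ ‖poch a (m + n) / poch c (m + n)‖ * (‖poch b m / poch 1 m‖ * (s ^ m * s ^ m)) *
          (‖poch b' n / poch 1 n‖ * (s ^ n * s ^ n)) := by gcongr
    _ = u (m + n) * (v b m * v b' n) := by simp only [u, v, pow_add]; ring
    _ ≤ (∑' j, u j) * (v b m * v b' n) := by gcongr; exact hu_le _

lemma appellF1Term_contiguous (a b b' : ℂ) {c : ℂ} (hc : ∀ m : ℕ, c ≠ -m) (x y : ℂ)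
    (p : ℕ × ℕ) :
    c * appellF1Term a b b' c x y p =
      (c - a) * appellF1Term a b b' (c + 1) x y p +
        a * appellF1Term (a + 1) b b' (c + 1) x y p := by
  obtain ⟨m, n⟩ := p
  simp only [appellF1Term_eq]
  linear_combination (poch b m / poch 1 m * x ^ m) * (poch b' n / poch 1 n * y ^ n) *
    poch_div_poch_contiguous a c (m + n) (poch_ne_zero hc _)
      (poch_ne_zero (add_one_ne_neg_natCast hc) _)

theorem appellF1_contiguous_general (a b b' c : ℂ)
    (hc : ∀ m : ℕ, c ≠ -(m : ℂ))
    (x y : ℂ) (hx : ‖x‖ < 1) (hy : ‖y‖ < 1) :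
    c * appellF1 a b b' c x y - (c - a) * appellF1 a b b' (c + 1) x y -
      a * appellF1 (a + 1) b b' (c + 1) x y = 0 := by
  simp only [appellF1_eq_tsum]
  rw [sub_sub, sub_eq_zero, ← tsum_mul_left, ← tsum_mul_left, ← tsum_mul_left,
    ← Summable.tsum_add ((summable_appellF1Term _ _ _ _ hx hy).mul_left _)
      ((summable_appellF1Term _ _ _ _ hx hy).mul_left _)]
  exact tsum_congr (appellF1Term_contiguous a b b' hc x y)

theorem appellF1_contiguous (a b b' c : ℂ)
    (hc : ∀ m : ℕ, c ≠ -(m : ℂ)) (hc1 : ∀ m : ℕ, c + 1 ≠ -(m : ℂ))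
    (x y : ℂ) (hx : ‖x‖ < 1) (hy : ‖y‖ < 1) :
    c * appellF1 a b b' c x y - (c - a) * appellF1 a b b' (c + 1) x y -
      a * appellF1 (a + 1) b b' (c + 1) x y = 0 :=
  appellF1_contiguous_general a b b' c hc x y hx hy
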